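/- Let n ≥ 3 be an integer. Suppose b₃, b₄, …, b_{n+1} are integers with b_i ≤ −2, and a₁, …, a_{n+3} are integers with −1 ≤ a_i ≤ 0, satisfying: (i) a₃ = 2a₁ and a₃ = 2a₂; (ii) a₁ + a₂ + b₃·a₃ + a₄ = −2 − b₃; (iii) a_{i−1} + b_i·a_i + a_{i+1} = −2 − b_i for all 4 ≤ i ≤ n; (iv) a_n + b_{n+1}·a_{n+1} + a_{n+2} + a_{n+3} = −2 − b_{n+1}; (v) a_{n+1} = 2a_{n+2} and a_{n+1} = 2a_{n+3}. Then a_i = 0 for all 1 ≤ i ≤ n+3 and b_i = −2 for all 3 ≤ i ≤ n+1. -/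
import Mathlib


/-- the adjunction relations for a D̃-shaped resolution dual graph force all
discrepancies `a_i` to vanish and all central self-intersections `b_i` to equal `-2`. -/
theorem stmt_12 (n : ℕ) (hn : 3 ≤ n) (b a : ℕ → ℤ)
    (hb : ∀ i, 3 ≤ i → i ≤ n + 1 → b i ≤ -2)
    (ha : ∀ i, 1 ≤ i → i ≤ n + 3 → -1 ≤ a i ∧ a i ≤ 0)
    (h1 : a 3 = 2 * a 1) (h2 : a 3 = 2 * a 2)
    (h3 : a 1 + a 2 + b 3 * a 3 + a 4 = -2 - b 3)
    (h4 : ∀ i, 4 ≤ i → i ≤ n → a (i - 1) + b i * a i + a (i + 1) = -2 - b i)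
    (h5 : a n + b (n + 1) * a (n + 1) + a (n + 2) + a (n + 3) = -2 - b (n + 1))
    (h6 : a (n + 1) = 2 * a (n + 2)) (h7 : a (n + 1) = 2 * a (n + 3)) :
    (∀ i, 1 ≤ i → i ≤ n + 3 → a i = 0) ∧ (∀ i, 3 ≤ i → i ≤ n + 1 → b i = -2) := by
  have ha3 := ha 3 (by omega) (by omega)
  have ha1 : a 1 = 0 := by omega
  have ha2 : a 2 = 0 := by omega
  have ha3' : a 3 = 0 := by omega
  have hb3 := hb 3 (by omega) (by omega)
  have ha4' := ha 4 (by omega) (by omega)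
  have ha4 : a 4 = 0 := by
    rw [ha1, ha2, ha3', mul_zero] at h3; omega
  have hb3' : b 3 = -2 := by
    rw [ha1, ha2, ha3', ha4, mul_zero] at h3; omega
  -- chain induction
  have key : ∀ k, k ≤ n - 3 → a (k + 3) = 0 ∧ a (k + 4) = 0 ∧ (4 ≤ k + 3 → b (k + 3) = -2) := by
    intro k
    induction k with
    | zero => intro _; exact ⟨ha3', ha4, by omega⟩
    | succ m ih =>
      intro hm
      obtain ⟨e1, e2, _⟩ := ih (by omega)
      have heq := h4 (m + 4) (by omega) (by omega)
      rw [show m + 4 - 1 = m + 3 from rfl, show m + 4 + 1 = m + 5 from by omega,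
        e1, e2, mul_zero] at heq
      have hbm := hb (m + 4) (by omega) (by omega)
      have ham5 := ha (m + 5) (by omega) (by omega)
      rw [show m + 1 + 3 = m + 4 from by omega, show m + 1 + 4 = m + 5 from by omega]
      exact ⟨e2, by omega, fun _ => by omega⟩
  have hazero : ∀ i, 3 ≤ i → i ≤ n + 1 → a i = 0 := by
    intro i hi1 hi2
    rcases Nat.lt_or_ge i (n + 1) with h | h
    · obtain ⟨e1, _, _⟩ := key (i - 3) (by omega)
      rwa [show i - 3 + 3 = i from by omega] at e1
    · obtain ⟨_, e2, _⟩ := key (n - 3) (by omega)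
      rwa [show n - 3 + 4 = i from by omega] at e2
  have hnp1 := hazero (n + 1) (by omega) (by omega)
  have hn2 : a (n + 2) = 0 := by omega
  have hn3 : a (n + 3) = 0 := by omega
  have hbeq : ∀ i, 3 ≤ i → i ≤ n + 1 → b i = -2 := by
    intro i hi1 hi2
    rcases Nat.lt_or_ge i 4 with h | h
    · have : i = 3 := by omega
      rw [this]; exact hb3'
    rcases Nat.lt_or_ge i (n + 1) with h2 | h2
    · obtain ⟨_, _, e3⟩ := key (i - 3) (by omega)
      rw [show i - 3 + 3 = i from by omega] at e3; exact e3 (by omega)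
    · have hi : i = n + 1 := by omega
      subst hi
      have e1 := hazero n (by omega) (by omega)
      rw [e1, hnp1, hn2, hn3, mul_zero] at h5; omega
  refine ⟨fun i hi1 hi2 => ?_, hbeq⟩
  rcases Nat.lt_or_ge i 3 with h | h
  · interval_cases i <;> assumption
  · rcases Nat.lt_or_ge i (n + 2) with h2 | h2
    · exact hazero i h (by omega)
    · have : i = n + 2 ∨ i = n + 3 := by omega
      rcases this with rfl | rfl <;> assumption
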